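/- Shade-partition lemma for trees: let T be a finite rooted tree, S a subset of its vertices, and N a positive integer. Then S can be partitioned into N (possibly empty) classes S_1, ..., S_N ('shades') such that for every vertex v of T and every n ≤ N, if v has at least n descendants in S, then v has descendants in at least min(n, N) distinct shades. -/

import Mathlib

/-!
Fix any linear order on the vertices and compare vertices by the lexicographic order of their
paths from the root, i.e. in depth-first order. The descendants of `v` are the vertices whose root
path extends that of `v`, so they form an interval. Shading the `k`-th vertex of `S` with `k mod N`,
the vertices of `S` below `v` get consecutive indices, and `m ≤ N` consecutive indices have
distinct residues.
-/

open Set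

theorem List.ordConnected_setOf_prefix {α : Type*} [LinearOrder α] (l : List α) :
    {x : List α | l <+: x}.OrdConnected := by
  have head_le {b c : α} {s t : List α} (h : b :: s ≤ c :: t) : b ≤ c :=
    h.lt_or_eq.elim List.head_le_of_lt fun h => (List.cons.inj h).1.le
  have tail_le {b : α} {s t : List α} (h : b :: s ≤ b :: t) : s ≤ t :=
    not_lt.1 fun h' => not_lt.2 h (List.Lex.cons h')
  induction l with
  | nil => exact ⟨fun _ _ _ _ _ _ => List.nil_prefix⟩
  | cons a l ih =>
    refine ⟨?_⟩
    rintro (_ | ⟨b, x⟩) hx (_ | ⟨d, z⟩) hz (_ | ⟨e, y⟩) ⟨hxy, hyz⟩ <;>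
      simp only [mem_ofPred_eq, List.prefix_nil, reduceCtorEq, List.cons_prefix_cons] at hx hz ⊢
    · exact absurd hxy (not_le.2 (List.nil_lt_cons _ _))
    obtain ⟨rfl, hx⟩ := hx
    obtain ⟨rfl, hz⟩ := hz
    obtain rfl : e = a := le_antisymm (head_le hyz) (head_le hxy)
    exact ⟨rfl, ih.out hx hz ⟨tail_le hxy, tail_le hyz⟩⟩

theorem Set.OrdConnected.min_ncard_le_ncard_image_mod {R : Set ℕ} (hR : R.OrdConnected)
    (hfin : R.Finite) (N : ℕ) : min R.ncard N ≤ ((· % N) '' R).ncard := by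
  by_cases hinj : InjOn (· % N) R
  · rw [hinj.ncard_image]
    exact min_le_left _ _
  obtain ⟨x, hx, y, hy, hxy, hne⟩ : ∃ x ∈ R, ∃ y ∈ R, x % N = y % N ∧ x ≠ y := by
    simpa [InjOn] using hinj
  wlog hlt : x < y generalizing x y
  · exact this y hy x hx hxy.symm hne.symm (hne.lt_or_gt.resolve_left hlt)
  -- two indices with equal residues span a full period
  have hxN : x + N ≤ y := by
    have := Nat.le_of_dvd (by omega) ((Nat.modEq_iff_dvd' hlt.le).1 hxy)
    omega
  have hperiod : InjOn (fun i => (x + i) % N) (Finset.range N) := fun i hi j hj h =>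
    Nat.ModEq.eq_of_lt_of_lt (Nat.ModEq.add_left_cancel' x h) (Finset.mem_range.1 hi)
      (Finset.mem_range.1 hj)
  have hsub : (fun i => (x + i) % N) '' (Finset.range N) ⊆ (· % N) '' R := by
    rintro _ ⟨i, hi, rfl⟩
    exact ⟨x + i, hR.out hx hy ⟨by omega, by simp at hi; omega⟩, rfl⟩
  calc min R.ncard N ≤ N := min_le_right _ _
    _ = ((fun i => (x + i) % N) '' (Finset.range N)).ncard := by
      rw [hperiod.ncard_image, ncard_coe_finset, Finset.card_range]
    _ ≤ _ := ncard_le_ncard hsub (hfin.image _)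

namespace Finset

variable {α : Type*} [LinearOrder α] (s : Finset α)

def rank (x : α) : ℕ := #{y ∈ s | y < x}

variable {s}

theorem rank_lt_rank {x y : α} (hx : x ∈ s) (hxy : x < y) : s.rank x < s.rank y :=
  card_lt_card ⟨fun _ hz => mem_filter.2 ⟨(mem_filter.1 hz).1, (mem_filter.1 hz).2.trans hxy⟩,
    fun hsub => lt_irrefl x (mem_filter.1 (hsub (mem_filter.2 ⟨hx, hxy⟩))).2⟩

theorem strictMonoOn_rank : StrictMonoOn s.rank s := fun _ hx _ _ hxy => rank_lt_rank hx hxy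

theorem rank_lt_card {x : α} (hx : x ∈ s) : s.rank x < #s :=
  card_lt_card (filter_ssubset.2 ⟨x, hx, lt_irrefl x⟩)

theorem image_rank : s.image s.rank = range #s :=
  eq_of_subset_of_card_le (fun _ hk => by
      obtain ⟨x, hx, rfl⟩ := mem_image.1 hk
      exact mem_range.2 (rank_lt_card hx))
    (by rw [card_range, card_image_of_injOn strictMonoOn_rank.injOn])

theorem ordConnected_image_rank {I : Set α} (hI : I.OrdConnected) :
    (s.rank '' (↑s ∩ I)).OrdConnected := by
  refine ⟨?_⟩
  rintro _ ⟨x, ⟨hxs, hxI⟩, rfl⟩ _ ⟨y, ⟨hys, hyI⟩, rfl⟩ k ⟨hxk, hky⟩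
  obtain ⟨z, hzs, rfl⟩ := mem_image.1 <| (image_rank (s := s)).symm ▸
    mem_range.2 (hky.trans_lt (rank_lt_card hys))
  refine ⟨z, ⟨hzs, hI.out hxI hyI ⟨?_, ?_⟩⟩, rfl⟩
  · exact (strictMonoOn_rank.le_iff_le hxs hzs).1 hxk
  · exact (strictMonoOn_rank.le_iff_le hzs hys).1 hky

end Finset

theorem Set.Finite.exists_colouring_min_ncard_le_ordConnected {α : Type*} [LinearOrder α]
    {s : Set α} (hs : s.Finite) {N : ℕ} (hN : 0 < N) :
    ∃ c : α → Fin N, ∀ I : Set α, I.OrdConnected →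
      min (s ∩ I).ncard N ≤ (c '' (s ∩ I)).ncard := by
  set t := hs.toFinset
  let c : α → Fin N := fun x => ⟨t.rank x % N, Nat.mod_lt _ hN⟩
  refine ⟨c, fun I hI => ?_⟩
  have hfin : (↑t ∩ I).Finite := t.finite_toSet.inter_of_left I
  rw [← hs.coe_toFinset]
  calc min (↑t ∩ I).ncard N = min (t.rank '' (↑t ∩ I)).ncard N := by
        rw [(Finset.strictMonoOn_rank.injOn.mono inter_subset_left).ncard_image]
    _ ≤ ((· % N) '' (t.rank '' (↑t ∩ I))).ncard :=
        (Finset.ordConnected_image_rank hI).min_ncard_le_ncard_image_mod (hfin.image _) N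
    _ = (Fin.val '' (c '' (↑t ∩ I))).ncard := by simp only [c, image_image]
    _ ≤ _ := ncard_image_le (hfin.image _)

namespace RootedTree

variable {V : Type*} {parent : V → Option V}

variable (parent) in
inductive IsPathToRoot : List V → Prop
  | root {r : V} : parent r = none → IsPathToRoot [r]
  | cons {v w : V} {l : List V} :
      parent v = some w → IsPathToRoot (w :: l) → IsPathToRoot (v :: w :: l)

theorem IsPathToRoot.eq_of_head?_eq {l₁ l₂ : List V} (h₁ : IsPathToRoot parent l₁)
    (h₂ : IsPathToRoot parent l₂) (h : l₁.head? = l₂.head?) : l₁ = l₂ := by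
  induction h₁ generalizing l₂ with
  | root hr =>
    cases h₂ with
    | root => simpa using h
    | cons hp _ => simp_all
  | cons hp _ ih =>
    cases h₂ with
    | root hr => simp_all
    | cons hp' h₂ =>
      obtain rfl : _ = _ := Option.some.inj h
      obtain rfl : _ = _ := Option.some.inj (hp.symm.trans hp')
      rw [ih h₂ rfl]

theorem exists_isPathToRoot {root : V} (hroot : parent root = none)
    (htree : ∀ v, Relation.ReflTransGen (fun a b => parent a = some b) v root) (v : V) :
    ∃ l, IsPathToRoot parent (v :: l) := by
  induction htree v using Relation.ReflTransGen.head_induction_on with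
  | refl => exact ⟨[], .root hroot⟩
  | head hp _ ih =>
    obtain ⟨l, hl⟩ := ih
    exact ⟨_, .cons hp hl⟩

theorem IsPathToRoot.reflTransGen_of_suffix {l : List V} (hl : IsPathToRoot parent l) {u v : V}
    {l' : List V} (hu : l.head? = some u) (hv : v :: l' <:+ l) :
    Relation.ReflTransGen (fun a b => parent a = some b) u v := by
  induction hl generalizing u with
  | @root r _ =>
    obtain rfl : r = u := Option.some.inj hu
    obtain ⟨rfl, -⟩ : v = r ∧ l' = [] := by simpa [List.suffix_cons_iff] using hv
    rfl
  | cons hp _ ih =>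
    simp only [List.head?_cons, Option.some.injEq] at hu
    subst hu
    rcases List.suffix_cons_iff.1 hv with h | h
    · obtain rfl := (List.cons.inj h).1
      rfl
    · exact .head hp (ih rfl h)

variable (h : ∀ v, ∃ l, IsPathToRoot parent (v :: l))

noncomputable def pathToRoot (v : V) : List V := v :: (h v).choose

theorem isPathToRoot_pathToRoot (v : V) : IsPathToRoot parent (pathToRoot h v) := (h v).choose_spec

theorem pathToRoot_injective : Function.Injective (pathToRoot h) := fun _ _ huv =>
  (List.cons.inj huv).1

theorem pathToRoot_of_parent_eq_some {v w : V} (hp : parent v = some w) :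
    pathToRoot h v = v :: pathToRoot h w :=
  (isPathToRoot_pathToRoot h v).eq_of_head?_eq (.cons hp (isPathToRoot_pathToRoot h w)) rfl

theorem reflTransGen_iff_suffix {u v : V} :
    Relation.ReflTransGen (fun a b => parent a = some b) u v ↔
      pathToRoot h v <:+ pathToRoot h u := by
  refine ⟨fun huv => ?_, (isPathToRoot_pathToRoot h u).reflTransGen_of_suffix rfl⟩
  induction huv using Relation.ReflTransGen.head_induction_on with
  | refl => exact List.suffix_refl _
  | head hp _ ih => exact ih.trans (pathToRoot_of_parent_eq_some h hp ▸ List.suffix_cons _ _)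

end RootedTree

open RootedTree in
/-- Shade-partition lemma for finite rooted trees: a subset `S` of vertices can be
painted with `N` shades so that any vertex with at least `n ≤ N` descendants in `S`
has descendants in `S` of at least `n` distinct shades. Descendants include the
vertex itself; the tree is given by a parent function, all vertices reaching the root. -/
theorem stmt13 {V : Type*} [Fintype V] (parent : V → Option V) (root : V)
    (hroot : parent root = none)
    (htree : ∀ v : V, Relation.ReflTransGen (fun a b => parent a = some b) v root)
    (S : Set V) (N : ℕ) (hN : 0 < N) :
    ∃ c : V → Fin N, ∀ (v : V) (n : ℕ), n ≤ N →
      n ≤ {u | Relation.ReflTransGen (fun a b => parent a = some b) u v ∧ u ∈ S}.ncard →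
      n ≤ (c '' {u | Relation.ReflTransGen (fun a b => parent a = some b) u v ∧ u ∈ S}).ncard := by
  let : LinearOrder V := LinearOrder.lift' _ (Fintype.equivFin V).injective
  set key : V → List V := List.reverse ∘ pathToRoot (exists_isPathToRoot hroot htree)
  have hkey : Function.Injective key := List.reverse_injective.comp (pathToRoot_injective _)
  obtain ⟨c, hc⟩ := (toFinite (key '' S)).exists_colouring_min_ncard_le_ordConnected hN
  refine ⟨c ∘ key, fun v n hnN hn => ?_⟩
  have hsubtree : {u | Relation.ReflTransGen (fun a b => parent a = some b) u v ∧ u ∈ S} =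
      S ∩ key ⁻¹' {l | key v <+: l} := by
    ext u
    simp [key, List.reverse_prefix, ← reflTransGen_iff_suffix, and_comm]
  rw [hsubtree, ← hkey.injOn.ncard_image, image_inter_preimage] at hn
  rw [hsubtree, image_comp, image_inter_preimage]
  exact (le_min hn hnN).trans (hc _ (List.ordConnected_setOf_prefix _))
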